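/- Let F : ℝⁿ → ℝⁿ be continuously differentiable, let z ≠ 0 be a zero of F, and suppose ‖F'(x)⁻¹‖ ≤ K, ‖F'(x) − F'(y)‖ ≤ L‖x − y‖, ‖F'(x)‖ ≤ M for all x, y. Consider the quasi-Newton iteration with exact subtraction x_{k+1} = g(x_k) − E_k F'(x_k)⁻¹F(x_k), and set r_k = ‖z − x_k‖/‖z‖. If λ ∈ (0,1] and C > 0 are such that ‖E_k‖ ≤ C r_k^λ for all k, then r_{k+1} ≤ ((1/2)LK‖z‖ r_k^{1−λ} + CKM) r_k^{1+λ} for all k. -/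

import Mathlib

open Real

lemma taylor_quad {E : Type*} [NormedAddCommGroup E] [NormedSpace ℝ E]
    (F : E → E) (F' : E → (E →L[ℝ] E))
    (hF : ∀ u, HasFDerivAt F (F' u) u)
    (L : ℝ) (hL0 : 0 ≤ L)
    (hLip : ∀ u v, ‖F' u - F' v‖ ≤ L * ‖u - v‖)
    (a z : E) :
    ‖F z - F a - F' a (z - a)‖ ≤ L / 2 * ‖z - a‖ ^ 2 := by
  set e := z - a with he
  set f : ℝ → E := fun t => F (a + t • e) - F a - t • (F' a e) with hf
  set f' : ℝ → E := fun t => F' (a + t • e) e - F' a e with hf'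
  have hderiv : ∀ t : ℝ, HasDerivAt f (f' t) t := by
    intro t
    have h1 : HasDerivAt (fun s : ℝ => a + s • e) e t := by
      simpa using ((hasDerivAt_id t).smul_const e).const_add a
    have h2 : HasDerivAt (fun s : ℝ => F (a + s • e)) (F' (a + t • e) e) t :=
      (hF (a + t • e)).comp_hasDerivAt t h1
    have h3 : HasDerivAt (fun s : ℝ => s • (F' a e)) (F' a e) t := by
      simpa using (hasDerivAt_id t).smul_const (F' a e)
    exact (h2.sub_const (F a)).sub h3
  set c : ℝ := L * ‖e‖ ^ 2 / 2 with hc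
  set B : ℝ → ℝ := fun t => c * t ^ 2 with hB
  set B' : ℝ → ℝ := fun t => c * (2 * t) with hB'
  have hBd : ∀ t : ℝ, HasDerivAt B (B' t) t := by
    intro t
    simpa [hB, hB', mul_comm, mul_assoc, mul_left_comm] using
      (hasDerivAt_pow 2 t).const_mul c
  have bound : ∀ t ∈ Set.Ico (0:ℝ) 1, ‖f' t‖ ≤ B' t := by
    intro t ht
    have h1 : ‖f' t‖ ≤ ‖F' (a + t • e) - F' a‖ * ‖e‖ := by
      have := (F' (a + t • e) - F' a).le_opNorm e
      simpa [hf'] using this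
    have h2 : ‖F' (a + t • e) - F' a‖ ≤ L * (t * ‖e‖) := by
      have := hLip (a + t • e) a
      simpa [norm_smul, abs_of_nonneg ht.1] using this
    have h3 : ‖f' t‖ ≤ L * (t * ‖e‖) * ‖e‖ :=
      h1.trans (by
        apply mul_le_mul_of_nonneg_right h2 (norm_nonneg e))
    calc ‖f' t‖ ≤ L * (t * ‖e‖) * ‖e‖ := h3
      _ = B' t := by ring
  have key : ‖f 1‖ ≤ B 1 := by
    refine image_norm_le_of_norm_deriv_right_le_deriv_boundary
      (f := f) (f' := f') (a := 0) (b := 1)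
      (fun t _ => (hderiv t).continuousAt.continuousWithinAt)
      (fun t _ => (hderiv t).hasDerivWithinAt) ?_ hBd bound ?_
    · simp [hf, hB]
    · exact Set.right_mem_Icc.mpr zero_le_one
  have hfe : f 1 = F z - F a - F' a e := by
    simp [hf, he]
  rw [hfe] at key
  calc ‖F z - F a - F' a (z - a)‖ = ‖F z - F a - F' a e‖ := by rw [he]
    _ ≤ B 1 := key
    _ = L / 2 * ‖z - a‖ ^ 2 := by simp [hB, hc, he]; ring



/-- **Section 3.3 (convergence of order `1 + λ`).** Under the uniform bounds
`‖F'(x)⁻¹‖ ≤ K`, `‖F'(x) − F'(y)‖ ≤ L‖x − y‖`, `‖F'(x)‖ ≤ M`, a nonzero zero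
`z` of `F`, and the quasi-Newton iteration with exact subtraction
`x_{k+1} = g(x_k) − E_k F'(x_k)⁻¹F(x_k)`: if `λ ∈ (0,1]`, `C > 0` and
`‖E_k‖ ≤ C r_k^λ` for all `k` (with `r_k = ‖z − x_k‖/‖z‖`), then
`r_{k+1} ≤ ((1/2)LK‖z‖ r_k^{1−λ} + CKM) r_k^{1+λ}` for all `k`. -/
theorem quasi_newton_order_convergence {n : ℕ}
    (F : EuclideanSpace ℝ (Fin n) → EuclideanSpace ℝ (Fin n))
    (F' F'inv : EuclideanSpace ℝ (Fin n) →
      (EuclideanSpace ℝ (Fin n) →L[ℝ] EuclideanSpace ℝ (Fin n)))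
    (hF : ∀ u, HasFDerivAt F (F' u) u)
    (hF'c : Continuous F')
    (hinv : ∀ u,
      (F' u).comp (F'inv u) = ContinuousLinearMap.id ℝ (EuclideanSpace ℝ (Fin n)) ∧
      (F'inv u).comp (F' u) = ContinuousLinearMap.id ℝ (EuclideanSpace ℝ (Fin n)))
    (K L M : ℝ)
    (hK : ∀ u, ‖F'inv u‖ ≤ K)
    (hLip : ∀ u v, ‖F' u - F' v‖ ≤ L * ‖u - v‖)
    (hM : ∀ u, ‖F' u‖ ≤ M)
    (z : EuclideanSpace ℝ (Fin n)) (hz : F z = 0) (hz0 : z ≠ 0)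
    (x : ℕ → EuclideanSpace ℝ (Fin n))
    (Ek : ℕ → (EuclideanSpace ℝ (Fin n) →L[ℝ] EuclideanSpace ℝ (Fin n)))
    (hiter : ∀ k, x (k + 1) =
      (x k - (F'inv (x k)) (F (x k))) - (Ek k) ((F'inv (x k)) (F (x k))))
    (r : ℕ → ℝ) (hr : ∀ j, r j = ‖z - x j‖ / ‖z‖)
    (lam : ℝ) (hlam0 : 0 < lam) (hlam1 : lam ≤ 1)
    (C : ℝ) (hC : 0 < C)
    (hE : ∀ k, ‖Ek k‖ ≤ C * r k ^ lam) :
    ∀ k, r (k + 1) ≤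
      ((1 / 2) * L * K * ‖z‖ * r k ^ (1 - lam) + C * K * M) * r k ^ (1 + lam) := by
  have hzpos : (0:ℝ) < ‖z‖ := norm_pos_iff.mpr hz0
  have hK0 : 0 ≤ K := le_trans (norm_nonneg _) (hK z)
  have hM0 : 0 ≤ M := le_trans (norm_nonneg _) (hM z)
  have hL0 : 0 ≤ L := by
    have h := hLip z 0
    have h2 := norm_nonneg (F' z - F' 0)
    rw [sub_zero] at h
    nlinarith
  intro k
  set a := x k with ha
  set e := z - a with he
  set w := F'inv a (F a) with hw
  -- the basic identity
  have hid2 : F'inv a (F' a e) = e := by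
    have h := congrArg (fun T : EuclideanSpace ℝ (Fin n) →L[ℝ] EuclideanSpace ℝ (Fin n) => T e)
      (hinv a).2
    simpa using h
  have key1 : e + w = F'inv a (F' a e + F a) := by
    rw [map_add, hid2]
  -- Taylor / Newton error
  have taylor : ‖F' a e + F a‖ ≤ L / 2 * ‖e‖ ^ 2 := by
    have h := taylor_quad F F' hF L hL0 hLip a z
    rw [hz] at h
    have : F' a e + F a = -(0 - F a - F' a (z - a)) := by
      rw [← he]; abel
    rw [this, norm_neg]
    simpa [he] using h
  have h1 : ‖e + w‖ ≤ K * (L / 2 * ‖e‖ ^ 2) := by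
    rw [key1]
    calc ‖F'inv a (F' a e + F a)‖ ≤ ‖F'inv a‖ * ‖F' a e + F a‖ :=
          (F'inv a).le_opNorm _
      _ ≤ K * (L / 2 * ‖e‖ ^ 2) :=
          mul_le_mul (hK a) taylor (norm_nonneg _) hK0
  -- mean value bound on ‖F a‖
  have hmv : ‖F a‖ ≤ M * ‖e‖ := by
    have h := convex_univ.norm_image_sub_le_of_norm_hasFDerivWithin_le
      (f := F) (f' := F') (C := M)
      (fun u _ => (hF u).hasFDerivWithinAt) (fun u _ => hM u)
      (Set.mem_univ z) (Set.mem_univ a)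
    rw [hz] at h
    simpa [he, norm_sub_rev] using h
  have hw2 : ‖w‖ ≤ K * (M * ‖e‖) := by
    calc ‖w‖ ≤ ‖F'inv a‖ * ‖F a‖ := (F'inv a).le_opNorm _
      _ ≤ K * (M * ‖e‖) := mul_le_mul (hK a) hmv (norm_nonneg _) hK0
  have hiterk : z - x (k + 1) = (e + w) + Ek k w := by
    rw [hiter k, ← ha, ← hw, he]; abel
  have hr0 : 0 ≤ r k := by rw [hr]; positivity
  have hEw : ‖Ek k w‖ ≤ C * r k ^ lam * (K * (M * ‖e‖)) := by
    calc ‖Ek k w‖ ≤ ‖Ek k‖ * ‖w‖ := (Ek k).le_opNorm _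
      _ ≤ C * r k ^ lam * (K * (M * ‖e‖)) := by
          apply mul_le_mul (hE k) hw2 (norm_nonneg _)
          positivity
  have hbound : ‖z - x (k + 1)‖ ≤
      K * (L / 2 * ‖e‖ ^ 2) + C * r k ^ lam * (K * (M * ‖e‖)) := by
    rw [hiterk]
    exact le_trans (norm_add_le _ _) (add_le_add h1 hEw)
  have hee : ‖e‖ = r k * ‖z‖ := by
    rw [hr]; field_simp [he]; rfl
  rcases eq_or_lt_of_le hr0 with h0 | hpos
  · -- r k = 0
    have hrk0 : r k = 0 := h0.symm
    have he0 : ‖e‖ = 0 := by rw [hee, hrk0, zero_mul]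
    have : ‖z - x (k+1)‖ ≤ 0 := by
      have := hbound
      rw [he0, hrk0] at this
      simpa [Real.zero_rpow (ne_of_gt hlam0)] using this
    have hle : r (k+1) ≤ 0 := by
      rw [hr]
      exact div_nonpos_of_nonpos_of_nonneg this (norm_nonneg z)
    calc r (k+1) ≤ 0 := hle
      _ ≤ _ := by
        rw [hrk0, Real.zero_rpow (by positivity : (1:ℝ) + lam ≠ 0), mul_zero]
  · -- r k > 0
    have hsum : K * (L / 2 * ‖e‖ ^ 2) + C * r k ^ lam * (K * (M * ‖e‖)) =
        (((1 / 2) * L * K * ‖z‖ * r k ^ (1 - lam) + C * K * M) * r k ^ (1 + lam)) * ‖z‖ := by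
      rw [hee]
      have e1 : r k ^ (1 - lam) * r k ^ (1 + lam) = r k * r k := by
        rw [← Real.rpow_add hpos, show (1 - lam) + (1 + lam) = (2:ℝ) by ring,
          show (2:ℝ) = ((2:ℕ):ℝ) by norm_num, Real.rpow_natCast]
        ring
      have e3 : r k ^ lam * r k = r k ^ (1 + lam) := by
        rw [Real.rpow_add hpos, Real.rpow_one]; ring
      linear_combination (-(1/2)*L*K*‖z‖*‖z‖) * e1 + (C*K*M*‖z‖) * e3
    have hfin : ‖z - x (k+1)‖ ≤
        (((1 / 2) * L * K * ‖z‖ * r k ^ (1 - lam) + C * K * M) * r k ^ (1 + lam)) * ‖z‖ := by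
      rw [← hsum]; exact hbound
    rw [hr, div_le_iff₀ hzpos]
    exact hfin
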